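/- Let α : [0,∞) → [0,∞) be concave with α(0)=0, let (B, ‖·‖) be a Banach space, and let f : ℝᵈ → B be continuous with [f]_α := sup_{x≠y} ‖f(x)−f(y)‖/α(|x−y|) < ∞. Then for any ℝᵈ-valued random variable ξ, any real random variable η ∈ L^p(P) with E[η] = 0 and p ≥ 1, and any x ∈ ℝᵈ: ‖E[f(ξ)η]‖ ≤ [f]_α · ‖η‖_{L^p} · α(‖ξ − x‖_{L^{p/(p-1)}}). -/

import Mathlib

/-!
Since `E[η] = 0`, `E[f(ξ) η] = E[(f(ξ) - f(x)) η]`, and `‖f(ξ) - f(x)‖ ≤ M α(‖ξ - x‖)`.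
At `c = ‖ξ - x‖_q > 0` the concave `α` has a supporting line `a + m t`; nonnegativity of `α`
forces `m ≥ 0` (else the line, hence `α`, becomes negative) and `a ≥ α(0) ≥ 0`. Hence
`E[|η| α(‖ξ - x‖)] ≤ a E|η| + m E[|η| ‖ξ - x‖] ≤ (a + m c) ‖η‖_p = α(c) ‖η‖_p`
by `‖η‖_1 ≤ ‖η‖_p` and Hölder. If `c = 0`, then `ξ = x` almost surely.
-/

open MeasureTheory Set
open scoped ENNReal

lemma ConvexOn.exists_add_mul_sub_le {S : Set ℝ} {f : ℝ → ℝ} (hf : ConvexOn ℝ S f) {x : ℝ}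
    (hx : x ∈ interior S) : ∃ m, ∀ y ∈ S, f x + m * (y - x) ≤ f y := by
  refine ⟨derivWithin f (Ioi x) x, fun y hy => ?_⟩
  rcases lt_trichotomy y x with hyx | rfl | hxy
  · have hslope := (hf.slope_le_leftDeriv_of_mem_interior hy hx hyx).trans
      (hf.leftDeriv_le_rightDeriv_of_mem_interior hx)
    rw [slope_def_field, div_le_iff₀ (sub_pos.mpr hyx)] at hslope
    linarith
  · simp
  · have hslope := hf.rightDeriv_le_slope_of_mem_interior hx hy hxy
    rw [slope_def_field, le_div_iff₀ (sub_pos.mpr hxy)] at hslope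
    linarith

lemma ConcaveOn.exists_le_add_mul_sub {S : Set ℝ} {f : ℝ → ℝ} (hf : ConcaveOn ℝ S f) {x : ℝ}
    (hx : x ∈ interior S) : ∃ m, ∀ y ∈ S, f y ≤ f x + m * (y - x) := by
  obtain ⟨m, hm⟩ := hf.neg.exists_add_mul_sub_le hx
  refine ⟨-m, fun y hy => ?_⟩
  have := hm y hy
  simp only [Pi.neg_apply] at this
  linarith

lemma ConcaveOn.exists_nonneg_affine_majorant {α : ℝ → ℝ} (hconc : ConcaveOn ℝ (Ici 0) α)
    (hnonneg : ∀ t, 0 ≤ t → 0 ≤ α t) {c : ℝ} (hc : 0 < c) :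
    ∃ a m : ℝ, 0 ≤ a ∧ 0 ≤ m ∧ a + m * c = α c ∧ ∀ t, 0 ≤ t → α t ≤ a + m * t := by
  obtain ⟨m, hm⟩ := hconc.exists_le_add_mul_sub (x := c) (by rwa [interior_Ici])
  refine ⟨α c - m * c, m, ?_, ?_, by ring, fun t ht => by linarith [hm t ht]⟩
  · linarith [hm 0 self_mem_Ici, hnonneg 0 le_rfl]
  · by_contra! hneg
    set t := c - (α c + 1) / m
    have ht : 0 ≤ t := by
      have : (α c + 1) / m < 0 := div_neg_of_pos_of_neg (by linarith [hnonneg c hc.le]) hneg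
      linarith
    have hαt : α t ≤ -1 := by
      have := hm t ht
      rw [show t - c = -((α c + 1) / m) by ring, mul_neg, mul_div_cancel₀ _ hneg.ne] at this
      linarith
    linarith [hnonneg t ht]

section Integral

variable {Ω E : Type*} [MeasurableSpace Ω] {μ : Measure Ω} {p q : ℝ≥0∞} [NormedAddCommGroup E]

lemma integral_norm_smul_le_toReal_eLpNorm_mul [NormedSpace ℝ E] [ENNReal.HolderConjugate p q]
    {φ : Ω → ℝ} {F : Ω → E} (hφ : MemLp φ p μ) (hF : MemLp F q μ) :
    ∫ ω, ‖φ ω • F ω‖ ∂μ ≤ (eLpNorm φ p μ).toReal * (eLpNorm F q μ).toReal := by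
  have hφF : MemLp (φ • F) 1 μ := hF.smul hφ
  calc ∫ ω, ‖φ ω • F ω‖ ∂μ = (eLpNorm (φ • F) 1 μ).toReal := by
        rw [toReal_eLpNorm hφF.1, lpNorm_one_eq_integral_norm hφF.1]; rfl
    _ ≤ (eLpNorm φ p μ * eLpNorm F q μ).toReal :=
        ENNReal.toReal_mono (ENNReal.mul_ne_top hφ.eLpNorm_ne_top hF.eLpNorm_ne_top)
          (eLpNorm_smul_le_mul_eLpNorm hF.1 hφ.1)
    _ = (eLpNorm φ p μ).toReal * (eLpNorm F q μ).toReal := ENNReal.toReal_mul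

lemma integral_norm_le_toReal_eLpNorm [IsProbabilityMeasure μ] {g : Ω → E} (hp : 1 ≤ p)
    (hg : MemLp g p μ) : ∫ ω, ‖g ω‖ ∂μ ≤ (eLpNorm g p μ).toReal := by
  rw [← lpNorm_one_eq_integral_norm hg.1, ← toReal_eLpNorm hg.1]
  exact ENNReal.toReal_mono hg.eLpNorm_ne_top (eLpNorm_le_eLpNorm_of_exponent_le hp hg.1)

/-- The integrable minorant `G` stands in for `|η| α(‖Z‖)`, which need not be measurable. -/
theorem integral_le_toReal_eLpNorm_mul_concave [NormedSpace ℝ E] [IsProbabilityMeasure μ]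
    [ENNReal.HolderConjugate p q] {α : ℝ → ℝ} (hconc : ConcaveOn ℝ (Ici 0) α)
    (hnonneg : ∀ t, 0 ≤ t → 0 ≤ α t) {η : Ω → ℝ} (hη : MemLp η p μ) {Z : Ω → E}
    (hZ : MemLp Z q μ) {G : Ω → ℝ} (hG : Integrable G μ) (hGle : ∀ ω, G ω ≤ |η ω| * α ‖Z ω‖) :
    ∫ ω, G ω ∂μ ≤ (eLpNorm η p μ).toReal * α (eLpNorm Z q μ).toReal := by
  have hp : 1 ≤ p := ENNReal.HolderTriple.le p q 1
  have hq : q ≠ 0 := (zero_lt_one.trans_le (ENNReal.HolderTriple.le q p 1)).ne'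
  have hη1 := integral_norm_le_toReal_eLpNorm hp hη
  have hηint : Integrable (fun ω => ‖η ω‖) μ := (hη.integrable hp).norm
  set c := (eLpNorm Z q μ).toReal
  rcases (ENNReal.toReal_nonneg : 0 ≤ c).eq_or_lt with hc0 | hcpos
  · have hZ0 : Z =ᵐ[μ] 0 := (eLpNorm_eq_zero_iff hZ.1 hq).mp
      (((ENNReal.toReal_eq_zero_iff _).mp hc0.symm).resolve_right hZ.eLpNorm_ne_top)
    calc ∫ ω, G ω ∂μ ≤ ∫ ω, α c * ‖η ω‖ ∂μ := by
          refine integral_mono_ae hG (hηint.const_mul _) ?_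
          filter_upwards [hZ0] with ω hω
          rw [show c = 0 from hc0.symm]
          simpa [hω, mul_comm] using hGle ω
      _ = α c * ∫ ω, ‖η ω‖ ∂μ := integral_const_mul _ _
      _ ≤ α c * (eLpNorm η p μ).toReal := by gcongr; exact hnonneg c hc0.le
      _ = _ := mul_comm _ _
  · obtain ⟨a, m, ha, hm, hamc, hmaj⟩ := hconc.exists_nonneg_affine_majorant hnonneg hcpos
    have hηZ : Integrable (fun ω => ‖η ω • Z ω‖) μ :=
      (memLp_one_iff_integrable.mp (hZ.smul hη)).norm
    calc ∫ ω, G ω ∂μ ≤ ∫ ω, a * ‖η ω‖ + m * ‖η ω • Z ω‖ ∂μ := by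
          refine integral_mono hG ((hηint.const_mul _).add (hηZ.const_mul _)) fun ω => ?_
          calc G ω ≤ |η ω| * α ‖Z ω‖ := hGle ω
            _ ≤ |η ω| * (a + m * ‖Z ω‖) := by gcongr; exact hmaj _ (norm_nonneg _)
            _ = a * ‖η ω‖ + m * ‖η ω • Z ω‖ := by rw [norm_smul, Real.norm_eq_abs]; ring
      _ = a * ∫ ω, ‖η ω‖ ∂μ + m * ∫ ω, ‖η ω • Z ω‖ ∂μ := by
          rw [integral_add (hηint.const_mul _) (hηZ.const_mul _), integral_const_mul,
            integral_const_mul]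
      _ ≤ a * (eLpNorm η p μ).toReal + m * ((eLpNorm η p μ).toReal * c) := by
          gcongr; exact integral_norm_smul_le_toReal_eLpNorm_mul hη hZ
      _ = (eLpNorm η p μ).toReal * α c := by rw [← hamc]; ring

lemma integral_smul_sub_eq_of_integral_eq_zero [NormedSpace ℝ E] [CompleteSpace E] {η : Ω → ℝ}
    {g : Ω → E} (hg : Integrable (fun ω => η ω • g ω) μ) (hη : Integrable η μ) (hη0 : ∫ ω, η ω ∂μ = 0)
    (v : E) : ∫ ω, η ω • (g ω - v) ∂μ = ∫ ω, η ω • g ω ∂μ := by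
  simp_rw [smul_sub]
  rw [integral_sub hg (hη.smul_const v), integral_smul_const, hη0, zero_smul, sub_zero]

end Integral

theorem concave_holder_centered_general {Ω : Type*} [MeasurableSpace Ω]
    (μ : Measure Ω) [IsProbabilityMeasure μ]
    {B : Type*} [NormedAddCommGroup B] [NormedSpace ℝ B] [CompleteSpace B]
    {d : ℕ}
    (α : ℝ → ℝ) (hconc : ConcaveOn ℝ (Set.Ici 0) α)
    (hnonneg : ∀ s, 0 ≤ s → 0 ≤ α s)
    (f : EuclideanSpace ℝ (Fin d) → B)
    (M : ℝ) (hM : 0 ≤ M)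
    (hf : ∀ x y : EuclideanSpace ℝ (Fin d), ‖f x - f y‖ ≤ M * α (dist x y))
    (ξ : Ω → EuclideanSpace ℝ (Fin d)) (η : Ω → ℝ)
    (p q : ℝ≥0∞) (hp : 1 ≤ p) (hpq : 1/p + 1/q = 1)
    (hηp : MemLp η p μ) (hη0 : ∫ ω, η ω ∂μ = 0)
    (x : EuclideanSpace ℝ (Fin d))
    (hξq : MemLp (fun ω => ξ ω - x) q μ)
    (hint : Integrable (fun ω => η ω • f (ξ ω)) μ) :
    ‖∫ ω, η ω • f (ξ ω) ∂μ‖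
      ≤ M * (eLpNorm η p μ).toReal
          * α ((eLpNorm (fun ω => ξ ω - x) q μ).toReal) := by
  have : ENNReal.HolderConjugate p q :=
    ENNReal.holderConjugate_iff.mpr (by simpa only [one_div] using hpq)
  have hηint : Integrable η μ := hηp.integrable hp
  have hcentered : Integrable (fun ω => ‖η ω • (f (ξ ω) - f x)‖) μ := by
    simp_rw [smul_sub]
    exact (hint.sub (hηint.smul_const (f x))).norm
  have hbound (ω : Ω) : ‖η ω • (f (ξ ω) - f x)‖ ≤ |η ω| * (M * α ‖ξ ω - x‖) := by
    rw [norm_smul, Real.norm_eq_abs, ← dist_eq_norm (ξ ω) x]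
    exact mul_le_mul_of_nonneg_left (hf _ _) (abs_nonneg _)
  calc ‖∫ ω, η ω • f (ξ ω) ∂μ‖ = ‖∫ ω, η ω • (f (ξ ω) - f x) ∂μ‖ := by
        rw [integral_smul_sub_eq_of_integral_eq_zero hint hηint hη0]
    _ ≤ ∫ ω, ‖η ω • (f (ξ ω) - f x)‖ ∂μ := norm_integral_le_integral_norm _
    _ ≤ (eLpNorm η p μ).toReal * (M * α (eLpNorm (fun ω => ξ ω - x) q μ).toReal) :=
        integral_le_toReal_eLpNorm_mul_concave (hconc.smul hM)
          (fun t ht => mul_nonneg hM (hnonneg t ht)) hηp hξq hcentered hbound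
    _ = _ := by ring

/-- For concave `α : [0,∞) → [0,∞)` with `α 0 = 0`, a Banach space `B`,
continuous `f : ℝᵈ → B` with α-modulus `[f]_α ≤ M`, and a centered real random
variable `η ∈ L^p`, for any `x ∈ ℝᵈ`:
`‖E[f(ξ)η]‖ ≤ M ‖η‖_{L^p} α(‖ξ − x‖_{L^{q}})` with `1/p + 1/q = 1`. -/
theorem concave_holder_centered {Ω : Type*} [MeasurableSpace Ω]
    (μ : Measure Ω) [IsProbabilityMeasure μ]
    {B : Type*} [NormedAddCommGroup B] [NormedSpace ℝ B] [CompleteSpace B]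
    {d : ℕ}
    (α : ℝ → ℝ) (hconc : ConcaveOn ℝ (Set.Ici 0) α)
    (hnonneg : ∀ s, 0 ≤ s → 0 ≤ α s) (h0 : α 0 = 0)
    (f : EuclideanSpace ℝ (Fin d) → B) (hfcont : Continuous f)
    (M : ℝ) (hM : 0 ≤ M)
    (hf : ∀ x y : EuclideanSpace ℝ (Fin d), ‖f x - f y‖ ≤ M * α (dist x y))
    (ξ : Ω → EuclideanSpace ℝ (Fin d)) (η : Ω → ℝ)
    (hξm : AEMeasurable ξ μ)
    (p q : ℝ≥0∞) (hp : 1 ≤ p) (hpq : 1/p + 1/q = 1)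
    (hηp : MemLp η p μ) (hη0 : ∫ ω, η ω ∂μ = 0)
    (x : EuclideanSpace ℝ (Fin d))
    (hξq : MemLp (fun ω => ξ ω - x) q μ)
    (hint : Integrable (fun ω => η ω • f (ξ ω)) μ) :
    ‖∫ ω, η ω • f (ξ ω) ∂μ‖
      ≤ M * (eLpNorm η p μ).toReal
          * α ((eLpNorm (fun ω => ξ ω - x) q μ).toReal) :=
  concave_holder_centered_general μ α hconc hnonneg f M hM hf ξ η p q hp hpq hηp hη0 x hξq hint
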